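/- arXiv:1103.6024 — 2 statements merged into one kernel-verified Lean document; each statement's English description precedes it below -/
import Mathlib

section
/- Let N ≥ 2, let p, q satisfy 1 < p < N and 1 < q < Np/(N−p) (so that (N−p)/p ≠ N/q), or p ≥ N and 1 < q < ∞, and let λ > 0. Suppose φ ∈ C¹([0,R]) is positive on [0,R), satisfies φ'(0) = 0, φ(R) = 0, and solves −(r^{N−1}|φ'(r)|^{p−2}φ'(r))' = λ^p r^{N−1} φ(r)^{q−1} on (0,R) (i.e. the corresponding radial function on the ball B_R solves −div(|∇u|^{p−2}∇u) = λ^p u^{q−1} with zero boundary values). Then φ'(R) ≠ 0, i.e. the normal derivative of u on ∂B_R does not vanish. -/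
open MeasureTheory Metric Set
open scoped RealInnerProductSpace NNReal ENNReal Topology

noncomputable section

/-- The Euclidean space `ℝ^N`. -/
abbrev Euc (N : ℕ) : Type := EuclideanSpace ℝ (Fin N)

/-- Admissible smooth test functions for the twisted eigenvalue problem on `Ω`:
smooth, compactly supported in `Ω`, nonzero, and satisfying the mean constraint
`∫ |v|^{q-2} v = 0`. -/
def Admissible {N : ℕ} (Ω : Set (Euc N)) (q : ℝ) (v : Euc N → ℝ) : Prop :=
  ContDiff ℝ (⊤ : ℕ∞) v ∧ HasCompactSupport v ∧ tsupport v ⊆ Ω ∧ v ≠ 0 ∧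
    (∫ x : Euc N, |v x| ^ (q - 2) * v x) = 0

/-- Rayleigh quotient `‖Dv‖_{L^p} / ‖v‖_{L^q}` of a function `v` with (weak) gradient `Dv`. -/
def rayleigh {N : ℕ} (p q : ℝ) (v : Euc N → ℝ) (Dv : Euc N → Euc N) : ℝ :=
  (∫ x : Euc N, ‖Dv x‖ ^ p) ^ (1 / p) / (∫ x : Euc N, |v x| ^ q) ^ (1 / q)

/-- The first generalized twisted eigenvalue `λ^{p,q}(Ω)`, defined (equivalently) as the
infimum of the Rayleigh quotient over smooth compactly supported admissible functions. -/
def twistedEigenvalue (N : ℕ) (p q : ℝ) (Ω : Set (Euc N)) : ℝ :=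
  sInf ((fun v => rayleigh p q v (fun x => gradient v x)) '' {v | Admissible Ω q v})

/-- The exponent assumptions: `1 < p < ∞` and `1 < q < Np/(N-p)` if `p < N`,
`1 < q < ∞` if `p ≥ N`. -/
def ExponentOK (N : ℕ) (p q : ℝ) : Prop :=
  1 < p ∧ 1 < q ∧ (p < N → q < N * p / (N - p))

/-- `u` belongs to `W^{1,p}_0(Ω)` with weak gradient `Du`: both are in `L^p` and `u` is
approximated, together with its gradient, by smooth functions compactly supported in `Ω`. -/
def MemW1p0 {N : ℕ} (p : ℝ) (Ω : Set (Euc N)) (u : Euc N → ℝ) (Du : Euc N → Euc N) : Prop :=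
  MemLp u (ENNReal.ofReal p) volume ∧ MemLp Du (ENNReal.ofReal p) volume ∧
    ∀ ε : ℝ, 0 < ε → ∃ v : Euc N → ℝ,
      ContDiff ℝ (⊤ : ℕ∞) v ∧ HasCompactSupport v ∧ tsupport v ⊆ Ω ∧
      (∫ x : Euc N, |u x - v x| ^ p) ^ (1 / p) +
        (∫ x : Euc N, ‖Du x - gradient v x‖ ^ p) ^ (1 / p) < ε

/-- `u` (with weak gradient `Du`) realizes the infimum defining `λ^{p,q}(Ω)`. -/
def IsMinimizer {N : ℕ} (p q : ℝ) (Ω : Set (Euc N)) (u : Euc N → ℝ) (Du : Euc N → Euc N) :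
    Prop :=
  MemW1p0 p Ω u Du ∧ ¬ u =ᵐ[volume] (0 : Euc N → ℝ) ∧
    (∫ x : Euc N, |u x| ^ (q - 2) * u x) = 0 ∧
    rayleigh p q u Du = twistedEigenvalue N p q Ω

lemma cont_h (p : ℝ) (hp : 1 < p) : Continuous (fun t : ℝ => |t| ^ (p - 2) * t) := by
  rw [continuous_iff_continuousAt]
  intro t
  rcases eq_or_ne t 0 with rfl | ht
  · have habs : ∀ s : ℝ, ‖|s| ^ (p - 2) * s‖ ≤ |s| ^ (p - 1) := by
      intro s
      rcases eq_or_ne s 0 with rfl | hs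
      · simp [Real.zero_rpow (by linarith : p - 1 ≠ 0)]
      · have h0 : (0:ℝ) < |s| := abs_pos.2 hs
        have : ‖|s| ^ (p - 2) * s‖ = |s| ^ (p - 2) * |s| := by
          rw [Real.norm_eq_abs, abs_mul, abs_of_nonneg (Real.rpow_nonneg (abs_nonneg s) _)]
        rw [this, ← Real.rpow_add_one h0.ne']
        have he : p - 2 + 1 = p - 1 := by ring
        rw [he]
    have htend : Filter.Tendsto (fun s : ℝ => |s| ^ (p - 1)) (nhds 0) (nhds 0) := by
      have := (continuous_abs.rpow_const (fun x => Or.inr (by linarith : (0:ℝ) ≤ p - 1))).tendsto 0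
      simpa [Real.zero_rpow (by linarith : p - 1 ≠ 0)] using this
    have := squeeze_zero_norm habs htend
    simpa [ContinuousAt] using this
  · exact ((continuous_abs.continuousAt).rpow_const (Or.inl (abs_ne_zero.2 ht))).mul
      continuousAt_id

/-- A positive radial eigenfunction profile `φ` on `[0,R]` solving
`-(r^{N-1}|φ'|^{p-2}φ')' = λ^p r^{N-1} φ^{q-1}` with `φ'(0) = 0`, `φ(R) = 0` has
nonvanishing normal derivative: `φ'(R) ≠ 0`, provided either `1 < p < N` and
`1 < q < Np/(N-p)` (so that `(N-p)/p ≠ N/q`), or `p ≥ N` and `1 < q < ∞`. -/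
theorem stmt8 (N : ℕ) (hN : 2 ≤ N) (p q lam : ℝ)
    (hpq : (1 < p ∧ p < (N : ℝ) ∧ 1 < q ∧ q < N * p / (N - p)) ∨ ((N : ℝ) ≤ p ∧ 1 < p ∧ 1 < q))
    (hlam : 0 < lam)
    (R : ℝ) (hR : 0 < R)
    (φ Dφ : ℝ → ℝ)
    (hder : ∀ r ∈ Set.Icc 0 R, HasDerivWithinAt φ (Dφ r) (Set.Icc 0 R) r)
    (hcont : ContinuousOn Dφ (Set.Icc 0 R))
    (hpos : ∀ r ∈ Set.Ico 0 R, 0 < φ r)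
    (hD0 : Dφ 0 = 0) (hbd : φ R = 0)
    (hode : ∀ r ∈ Set.Ioo 0 R,
      HasDerivAt (fun s => s ^ ((N : ℝ) - 1) * |Dφ s| ^ (p - 2) * Dφ s)
        (-(lam ^ p * r ^ ((N : ℝ) - 1) * φ r ^ (q - 1))) r) :
    Dφ R ≠ 0 := by
  intro hDR
  have hp : 1 < p := by rcases hpq with ⟨h, _⟩ | ⟨_, h, _⟩ <;> exact h
  set g : ℝ → ℝ := fun s => s ^ ((N : ℝ) - 1) * |Dφ s| ^ (p - 2) * Dφ s with hg
  have hN1 : (1:ℝ) ≤ (N : ℝ) - 1 := by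
    have : (2:ℝ) ≤ (N : ℝ) := by exact_mod_cast hN
    linarith
  have hgcont : ContinuousOn g (Set.Icc 0 R) := by
    have h1 : ContinuousOn (fun s : ℝ => s ^ ((N : ℝ) - 1)) (Set.Icc 0 R) :=
      (continuous_id.rpow_const (fun x => Or.inr (by linarith))).continuousOn
    have h2 : ContinuousOn (fun s => |Dφ s| ^ (p - 2) * Dφ s) (Set.Icc 0 R) :=
      (cont_h p hp).comp_continuousOn hcont
    have := h1.mul h2
    exact this.congr (fun s _ => by simp only [hg, Pi.mul_apply, mul_assoc])
  have hanti : StrictAntiOn g (Set.Icc 0 R) := by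
    apply strictAntiOn_of_deriv_neg (convex_Icc 0 R) hgcont
    intro x hx
    rw [interior_Icc] at hx
    rw [(hode x hx).deriv]
    have hx0 : 0 < x := hx.1
    have hφ : 0 < φ x := hpos x ⟨le_of_lt hx0, hx.2⟩
    have h1 : 0 < lam ^ p := Real.rpow_pos_of_pos hlam p
    have h2 : 0 < x ^ ((N : ℝ) - 1) := Real.rpow_pos_of_pos hx0 _
    have h3 : 0 < φ x ^ (q - 1) := Real.rpow_pos_of_pos hφ _
    have := mul_pos (mul_pos h1 h2) h3
    linarith
  have hg0 : g 0 = 0 := by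
    simp [hg, Real.zero_rpow (by linarith : (N:ℝ) - 1 ≠ 0)]
  have hgR : g R = 0 := by simp [hg, hDR]
  have := hanti (Set.left_mem_Icc.2 hR.le) (Set.right_mem_Icc.2 hR.le) hR
  rw [hg0, hgR] at this
  exact lt_irrefl 0 this
end
end

section
/- Let N ≥ 2, let p, q satisfy 1 < p < ∞ and 1 < q < Np/(N−p) if 1 < p < N, respectively 1 < q < ∞ if p ≥ N, and let R > 0. Then the Cauchy problem −(r^{N−1}|φ'(r)|^{p−2}φ'(r))' = r^{N−1} |φ(r)|^{q−1} on (0,R), φ(0) = c, φ'(0) = 0, has at most one positive solution φ on [0,R] of class C¹([0,R]) ∩ C²((0,R)). -/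
open MeasureTheory Metric Set
open scoped RealInnerProductSpace NNReal ENNReal Topology

noncomputable section

open Filter intervalIntegral


lemma contG (p : ℝ) (hp : 1 < p) : Continuous (fun x : ℝ => |x| ^ (p-2) * x) := by
  rw [continuous_iff_continuousAt]
  intro x
  by_cases hx : x = 0
  · subst hx
    have h1 : Tendsto (fun x : ℝ => |x| ^ (p-1)) (nhds 0) (nhds 0) := by
      have h2 : ContinuousAt (fun t : ℝ => t ^ (p-1)) 0 :=
        Real.continuousAt_rpow_const 0 (p-1) (Or.inr (by linarith))
      have h0 : (0:ℝ) ^ (p-1) = 0 := Real.zero_rpow (by intro h; linarith)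
      have h3 : Tendsto (fun x : ℝ => |x|) (nhds 0) (nhds 0) := by
        simpa using continuous_abs.tendsto (0:ℝ)
      simpa [Function.comp_def, h0] using (h2.tendsto.comp h3)
    have hb : ∀ x : ℝ, ‖(|x| ^ (p-2) * x)‖ ≤ |x| ^ (p-1) := by
      intro x
      by_cases h : x = 0
      · simp [h, Real.zero_rpow (show p - 1 ≠ 0 by intro h; linarith)]
      · have hxa : (0:ℝ) < |x| := abs_pos.mpr h
        rw [Real.norm_eq_abs, abs_mul, abs_of_nonneg (Real.rpow_nonneg (abs_nonneg x) _),
          show p - 1 = (p-2) + 1 by ring, Real.rpow_add_one hxa.ne']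
    have h4 : Tendsto (fun x : ℝ => |x| ^ (p-2) * x) (nhds 0) (nhds 0) :=
      squeeze_zero_norm hb h1
    have h0 : |(0:ℝ)| ^ (p-2) * (0:ℝ) = 0 := by simp
    simpa [ContinuousAt, h0] using h4
  · exact ((continuous_abs.continuousAt).rpow_const (Or.inl (abs_ne_zero.mpr hx))).mul
      continuousAt_id

/-- Lipschitz bound for `x ↦ x^β` on `[m, M]`. -/
lemma rpow_lip {β m M : ℝ} (hβ : 0 < β) (hm : 0 < m) {a b : ℝ}
    (ha : a ∈ Icc m M) (hb : b ∈ Icc m M) :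
    |a ^ β - b ^ β| ≤ β * (m ^ (β-1) + M ^ (β-1)) * |a - b| := by
  have hMm : m ≤ M := le_trans ha.1 ha.2
  have key : ∀ x ∈ Icc m M, HasDerivWithinAt (fun t : ℝ => t ^ β)
      (β * x ^ (β - 1)) (Icc m M) x := by
    intro x hx
    exact (Real.hasDerivAt_rpow_const (Or.inl (by linarith [hx.1] : x ≠ 0))).hasDerivWithinAt
  have bound : ∀ x ∈ Icc m M, ‖β * x ^ (β - 1)‖ ≤ β * (m ^ (β-1) + M ^ (β-1)) := by
    intro x hx
    have hx0 : 0 < x := lt_of_lt_of_le hm hx.1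
    rw [Real.norm_eq_abs, abs_of_nonneg (by positivity)]
    have : x ^ (β - 1) ≤ m ^ (β-1) + M ^ (β-1) := by
      rcases le_total 1 β with h1 | h1
      · have : x ^ (β-1) ≤ M ^ (β-1) := Real.rpow_le_rpow hx0.le hx.2 (by linarith)
        have hm' : 0 ≤ m ^ (β-1) := Real.rpow_nonneg hm.le _
        linarith
      · have : x ^ (β-1) ≤ m ^ (β-1) := Real.rpow_le_rpow_of_nonpos hm hx.1 (by linarith)
        have hM' : 0 ≤ M ^ (β-1) := Real.rpow_nonneg (le_trans hm.le hMm) _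
        linarith
    nlinarith [Real.rpow_nonneg hx0.le (β-1)]
  have := (convex_Icc m M).norm_image_sub_le_of_norm_hasDerivWithin_le key bound hb ha
  simpa [Real.norm_eq_abs] using this

def projR (R s : ℝ) : ℝ := max 0 (min s R)

lemma projR_mem {R : ℝ} (hR : 0 ≤ R) (s : ℝ) : projR R s ∈ Icc 0 R :=
  ⟨le_max_left _ _, max_le hR (min_le_right _ _)⟩

lemma projR_eq {R s : ℝ} (hs : s ∈ Icc 0 R) : projR R s = s := by
  have : min s R = s := min_eq_left hs.2
  simp [projR, this, hs.1]

lemma contProjR (R : ℝ) : Continuous (projR R) :=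
  continuous_const.max (continuous_id.min continuous_const)

def psiF (N : ℕ) (q R : ℝ) (φ : ℝ → ℝ) (s : ℝ) : ℝ :=
  s ^ ((N:ℝ)-1) * |φ (projR R s)| ^ (q-1)

def HF (N : ℕ) (q R : ℝ) (φ : ℝ → ℝ) (r : ℝ) : ℝ := ∫ s in (0:ℝ)..r, psiF N q R φ s

lemma contPsi {N : ℕ} (hN : 1 ≤ N) {q R : ℝ} (hq : 1 ≤ q) (hR : 0 ≤ R) {φ : ℝ → ℝ}
    (hφ : ContinuousOn φ (Icc 0 R)) : Continuous (psiF N q R φ) := by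
  have hc : Continuous (fun s => φ (projR R s)) :=
    hφ.comp_continuous (contProjR R) (projR_mem hR)
  have h1 : Continuous (fun s : ℝ => s ^ ((N:ℝ)-1)) := by
    rw [continuous_iff_continuousAt]
    intro x
    refine Real.continuousAt_rpow_const x _ (Or.inr ?_)
    have : (1:ℝ) ≤ (N:ℝ) := by exact_mod_cast hN
    linarith
  refine h1.mul ?_
  rw [continuous_iff_continuousAt]
  intro x
  exact (continuous_abs.comp hc).continuousAt.rpow_const (Or.inr (by linarith : (0:ℝ) ≤ q - 1))

lemma HF_hasDeriv {N : ℕ} (hN : 1 ≤ N) {q R : ℝ} (hq : 1 ≤ q) (hR : 0 ≤ R) {φ : ℝ → ℝ}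
    (hφ : ContinuousOn φ (Icc 0 R)) (r : ℝ) :
    HasDerivAt (HF N q R φ) (psiF N q R φ r) r := by
  have hc := contPsi hN hq hR hφ
  exact integral_hasDerivAt_right (hc.intervalIntegrable _ _)
    (hc.stronglyMeasurableAtFilter _ _) hc.continuousAt

/-- Integral representation of the flux: `r^{N-1} |Dφ r|^{p-2} Dφ r = - HF r` on `[0,R]`. -/
lemma repA (N : ℕ) (hN : 2 ≤ N) (p q R : ℝ) (hp : 1 < p) (hq : 1 < q) (hR : 0 < R)
    (φ Dφ : ℝ → ℝ)
    (hder : ∀ r ∈ Icc 0 R, HasDerivWithinAt φ (Dφ r) (Icc 0 R) r)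
    (hcont : ContinuousOn Dφ (Icc 0 R))
    (hode : ∀ r ∈ Ioo 0 R,
      HasDerivAt (fun s => s ^ ((N : ℝ) - 1) * |Dφ s| ^ (p - 2) * Dφ s)
        (-(r ^ ((N : ℝ) - 1) * |φ r| ^ (q - 1))) r)
    (hiv' : Dφ 0 = 0) :
    ∀ r ∈ Icc 0 R, r ^ ((N : ℝ) - 1) * |Dφ r| ^ (p - 2) * Dφ r = - HF N q R φ r := by
  have hN1 : 1 ≤ N := le_trans (by norm_num) hN
  have hφc : ContinuousOn φ (Icc 0 R) := fun x hx => (hder x hx).continuousWithinAt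
  set F : ℝ → ℝ := fun s => s ^ ((N : ℝ) - 1) * |Dφ s| ^ (p - 2) * Dφ s with hF
  set K : ℝ → ℝ := fun s => F s + HF N q R φ s with hK
  -- continuity of F on Icc
  have h1 : Continuous (fun s : ℝ => s ^ ((N:ℝ)-1)) := by
    rw [continuous_iff_continuousAt]
    intro x
    refine Real.continuousAt_rpow_const x _ (Or.inr ?_)
    have : (1:ℝ) ≤ (N:ℝ) := by exact_mod_cast hN1
    linarith
  have hFc : ContinuousOn F (Icc 0 R) := by
    have : ContinuousOn (fun s => |Dφ s| ^ (p-2) * Dφ s) (Icc 0 R) :=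
      (contG p hp).comp_continuousOn hcont
    have h2 : ContinuousOn (fun s => s ^ ((N:ℝ)-1) * (|Dφ s| ^ (p-2) * Dφ s)) (Icc 0 R) :=
      h1.continuousOn.mul this
    simpa [hF, mul_assoc] using h2
  have hKc : ContinuousOn K (Icc 0 R) :=
    hFc.add (fun x _ => (HF_hasDeriv hN1 hq.le hR.le hφc x).continuousAt.continuousWithinAt)
  -- K has zero derivative on the interior
  have hKd : ∀ x ∈ interior (Icc (0:ℝ) R), HasDerivAt K 0 x := by
    intro x hx
    rw [interior_Icc] at hx
    have h3 := (hode x hx).add (HF_hasDeriv hN1 hq.le hR.le hφc x)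
    have hx' : x ∈ Icc 0 R := Ioo_subset_Icc_self hx
    have : psiF N q R φ x = x ^ ((N:ℝ)-1) * |φ x| ^ (q-1) := by
      rw [psiF, projR_eq hx']
    rw [this] at h3
    have h4 := h3
    simp at h4
    exact h4
  -- K is constant on Icc
  have hmono : MonotoneOn K (Icc 0 R) := by
    refine monotoneOn_of_deriv_nonneg (convex_Icc 0 R) hKc
      (fun x hx => (hKd x hx).differentiableAt.differentiableWithinAt) ?_
    intro x hx; rw [(hKd x hx).deriv]
  have hanti : AntitoneOn K (Icc 0 R) := by
    refine antitoneOn_of_deriv_nonpos (convex_Icc 0 R) hKc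
      (fun x hx => (hKd x hx).differentiableAt.differentiableWithinAt) ?_
    intro x hx; rw [(hKd x hx).deriv]
  have h0 : (0:ℝ) ∈ Icc (0:ℝ) R := ⟨le_refl _, hR.le⟩
  have hK0 : K 0 = 0 := by
    have hHF0 : HF N q R φ 0 = 0 := by simp [HF]
    simp [hK, hF, hHF0, hiv']
  intro r hr
  have e1 : K r ≤ K 0 := hanti h0 hr hr.1
  have e2 : K 0 ≤ K r := hmono h0 hr hr.1
  have : K r = 0 := le_antisymm (hK0 ▸ e1) (hK0 ▸ e2)
  have hKr : F r + HF N q R φ r = 0 := this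
  have : F r = - HF N q R φ r := by linarith
  exact this

/-- Inversion of the signed power: if `|x|^{p-2} x = -t` with `t > 0` then `x = -t^{1/(p-1)}`. -/
lemma ginv (p : ℝ) (hp : 1 < p) {x t : ℝ} (ht : 0 < t)
    (h : |x| ^ (p-2) * x = -t) : x = -(t ^ (1/(p-1))) := by
  have hx : x < 0 := by
    by_contra hx
    push_neg at hx
    have : 0 ≤ |x| ^ (p-2) * x := mul_nonneg (Real.rpow_nonneg (abs_nonneg x) _) hx
    linarith
  have hax : 0 < |x| := abs_pos.mpr hx.ne
  have hxe : x = -|x| := by rw [abs_of_neg hx]; ring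
  have h2 : |x| ^ (p-1) = t := by
    have : |x| ^ (p-2) * x = -(|x| ^ (p-2) * |x|) := by
      conv_lhs => rw [hxe]
      rw [abs_neg, abs_abs]; ring
    rw [this] at h
    have h3 : |x| ^ (p-2) * |x| = |x| ^ (p-1) := by
      rw [show p - 1 = (p-2) + 1 by ring, Real.rpow_add_one hax.ne']
    rw [h3] at h
    linarith
  have hp1 : p - 1 ≠ 0 := by intro h'; linarith
  have : (|x| ^ (p-1)) ^ (1/(p-1)) = |x| := by
    rw [← Real.rpow_mul (abs_nonneg x), mul_one_div, div_self hp1, Real.rpow_one]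
  rw [hxe, ← this, h2]

/-- Bounds for `HF`. -/
lemma HF_bounds (N : ℕ) (hN : 2 ≤ N) (q R : ℝ) (hq : 1 < q) (hR : 0 < R)
    (φ : ℝ → ℝ) (hφ : ContinuousOn φ (Icc 0 R)) (m M : ℝ) (hm : 0 < m)
    (hbd : ∀ s ∈ Icc 0 R, φ s ∈ Icc m M) :
    ∀ r ∈ Icc 0 R, m ^ (q-1) * (r ^ ((N:ℝ)) / N) ≤ HF N q R φ r ∧
      HF N q R φ r ≤ M ^ (q-1) * (r ^ ((N:ℝ)) / N) := by
  have hN1 : 1 ≤ N := le_trans (by norm_num) hN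
  have hNR : (1:ℝ) ≤ (N:ℝ) := by exact_mod_cast hN1
  intro r hr
  have hint : ∫ s in (0:ℝ)..r, s ^ ((N:ℝ)-1) = r ^ ((N:ℝ)) / N := by
    rw [integral_rpow (Or.inl (by linarith))]
    rw [show (N:ℝ) - 1 + 1 = (N:ℝ) by ring, Real.zero_rpow (by positivity)]
    ring
  have hpsi_int : IntervalIntegrable (psiF N q R φ) volume 0 r :=
    (contPsi hN1 hq.le hR.le hφ).intervalIntegrable _ _
  have hrpow_int : IntervalIntegrable (fun s : ℝ => s ^ ((N:ℝ)-1)) volume 0 r :=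
    intervalIntegrable_rpow' (by linarith)
  have hsub : Icc (0:ℝ) r ⊆ Icc 0 R := Icc_subset_Icc (le_refl _) hr.2
  constructor
  · have hle : ∀ s ∈ Icc (0:ℝ) r, m ^ (q-1) * s ^ ((N:ℝ)-1) ≤ psiF N q R φ s := by
      intro s hs
      have hs' := hsub hs
      have hφs := hbd s hs'
      rw [psiF, projR_eq hs', abs_of_pos (lt_of_lt_of_le hm hφs.1)]
      have h1 : m ^ (q-1) ≤ (φ s) ^ (q-1) := Real.rpow_le_rpow hm.le hφs.1 (by linarith)
      have h2 : (0:ℝ) ≤ s ^ ((N:ℝ)-1) := Real.rpow_nonneg hs.1 _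
      nlinarith
    have := integral_mono_on hr.1 (hrpow_int.const_mul _) hpsi_int hle
    rwa [intervalIntegral.integral_const_mul, hint] at this
  · have hle : ∀ s ∈ Icc (0:ℝ) r, psiF N q R φ s ≤ M ^ (q-1) * s ^ ((N:ℝ)-1) := by
      intro s hs
      have hs' := hsub hs
      have hφs := hbd s hs'
      rw [psiF, projR_eq hs', abs_of_pos (lt_of_lt_of_le hm hφs.1)]
      have h1 : (φ s) ^ (q-1) ≤ M ^ (q-1) :=
        Real.rpow_le_rpow (by linarith [hφs.1]) hφs.2 (by linarith)
      have h2 : (0:ℝ) ≤ s ^ ((N:ℝ)-1) := Real.rpow_nonneg hs.1 _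
      nlinarith
    have := integral_mono_on hr.1 hpsi_int (hrpow_int.const_mul _) hle
    rwa [intervalIntegral.integral_const_mul, hint] at this

/-- Formula and bounds for `Dφ` at positive radii. -/
lemma Dphi_formula (N : ℕ) (hN : 2 ≤ N) (p q R : ℝ) (hp : 1 < p) (hq : 1 < q) (hR : 0 < R)
    (φ Dφ : ℝ → ℝ) (m M : ℝ) (hm : 0 < m)
    (hrep : ∀ r ∈ Icc 0 R, r ^ ((N : ℝ) - 1) * |Dφ r| ^ (p - 2) * Dφ r = - HF N q R φ r)
    (hbd : ∀ r ∈ Icc 0 R, m ^ (q-1) * (r ^ ((N:ℝ)) / N) ≤ HF N q R φ r ∧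
      HF N q R φ r ≤ M ^ (q-1) * (r ^ ((N:ℝ)) / N)) :
    ∀ r ∈ Ioc 0 R,
      Dφ r = -((r ^ (-((N:ℝ)-1)) * HF N q R φ r) ^ (1/(p-1))) ∧
      m ^ (q-1) / N * r ≤ r ^ (-((N:ℝ)-1)) * HF N q R φ r ∧
      r ^ (-((N:ℝ)-1)) * HF N q R φ r ≤ M ^ (q-1) / N * r := by
  intro r hr
  have hr0 : (0:ℝ) < r := hr.1
  have hrI : r ∈ Icc 0 R := ⟨hr0.le, hr.2⟩
  have hNpos : (0:ℝ) < (N:ℝ) := by positivity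
  have hcancel : r ^ (-((N:ℝ)-1)) * r ^ ((N:ℝ)) = r := by
    rw [← Real.rpow_add hr0, show -((N:ℝ)-1) + (N:ℝ) = 1 by ring, Real.rpow_one]
  have hrp : (0:ℝ) < r ^ (-((N:ℝ)-1)) := Real.rpow_pos_of_pos hr0 _
  have hbds := hbd r hrI
  have key : ∀ c : ℝ, r ^ (-((N:ℝ)-1)) * (c * (r ^ ((N:ℝ)) / N)) = c / N * r := by
    intro c
    have : r ^ (-((N:ℝ)-1)) * (c * (r ^ ((N:ℝ)) / N)) =
        c / N * (r ^ (-((N:ℝ)-1)) * r ^ ((N:ℝ))) := by ring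
    rw [this, hcancel]
  have hlow : m ^ (q-1) / N * r ≤ r ^ (-((N:ℝ)-1)) * HF N q R φ r := by
    rw [← key (m ^ (q-1))]
    exact mul_le_mul_of_nonneg_left hbds.1 hrp.le
  have hhigh : r ^ (-((N:ℝ)-1)) * HF N q R φ r ≤ M ^ (q-1) / N * r := by
    rw [← key (M ^ (q-1))]
    exact mul_le_mul_of_nonneg_left hbds.2 hrp.le
  have hHpos : 0 < r ^ (-((N:ℝ)-1)) * HF N q R φ r :=
    lt_of_lt_of_le (by positivity) hlow
  refine ⟨?_, hlow, hhigh⟩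
  -- invert the representation
  have hrep' := hrep r hrI
  have hrN : (0:ℝ) < r ^ ((N:ℝ)-1) := Real.rpow_pos_of_pos hr0 _
  have heq : |Dφ r| ^ (p-2) * Dφ r = -(r ^ (-((N:ℝ)-1)) * HF N q R φ r) := by
    have hinv : r ^ (-((N:ℝ)-1)) * r ^ ((N:ℝ)-1) = 1 := by
      rw [← Real.rpow_add hr0, show -((N:ℝ)-1) + ((N:ℝ)-1) = 0 by ring, Real.rpow_zero]
    have := congrArg (fun y => r ^ (-((N:ℝ)-1)) * y) hrep'
    calc |Dφ r| ^ (p-2) * Dφ r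
        = r ^ (-((N:ℝ)-1)) * r ^ ((N:ℝ)-1) * (|Dφ r| ^ (p-2) * Dφ r) := by rw [hinv, one_mul]
      _ = r ^ (-((N:ℝ)-1)) * (r ^ ((N:ℝ)-1) * |Dφ r| ^ (p-2) * Dφ r) := by ring
      _ = r ^ (-((N:ℝ)-1)) * (- HF N q R φ r) := by rw [hrep']
      _ = -(r ^ (-((N:ℝ)-1)) * HF N q R φ r) := by ring
  exact ginv p hp hHpos heq

set_option maxHeartbeats 1000000 in
/-- Lemma 4.2, uniqueness. The radial Cauchy problem
`-(r^{N-1}|φ'|^{p-2}φ')' = r^{N-1}|φ|^{q-1}`, `φ(0) = c`, `φ'(0) = 0` has at most one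
positive solution on `[0,R]` of class `C¹([0,R]) ∩ C²((0,R))`. -/
theorem stmt11 (N : ℕ) (hN : 2 ≤ N) (p q : ℝ) (hpq : ExponentOK N p q)
    (R c : ℝ) (hR : 0 < R)
    (φ₁ φ₂ Dφ₁ Dφ₂ : ℝ → ℝ)
    -- `φ₁` is a positive solution of class `C¹([0,R]) ∩ C²((0,R))`
    (hder₁ : ∀ r ∈ Set.Icc 0 R, HasDerivWithinAt φ₁ (Dφ₁ r) (Set.Icc 0 R) r)
    (hcont₁ : ContinuousOn Dφ₁ (Set.Icc 0 R))
    (hC2₁ : ∀ r ∈ Set.Ioo 0 R, DifferentiableAt ℝ Dφ₁ r)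
    (hpos₁ : ∀ r ∈ Set.Icc 0 R, 0 < φ₁ r)
    (hode₁ : ∀ r ∈ Set.Ioo 0 R,
      HasDerivAt (fun s => s ^ ((N : ℝ) - 1) * |Dφ₁ s| ^ (p - 2) * Dφ₁ s)
        (-(r ^ ((N : ℝ) - 1) * |φ₁ r| ^ (q - 1))) r)
    (hiv₁ : φ₁ 0 = c) (hiv₁' : Dφ₁ 0 = 0)
    -- `φ₂` is a positive solution of class `C¹([0,R]) ∩ C²((0,R))`
    (hder₂ : ∀ r ∈ Set.Icc 0 R, HasDerivWithinAt φ₂ (Dφ₂ r) (Set.Icc 0 R) r)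
    (hcont₂ : ContinuousOn Dφ₂ (Set.Icc 0 R))
    (hC2₂ : ∀ r ∈ Set.Ioo 0 R, DifferentiableAt ℝ Dφ₂ r)
    (hpos₂ : ∀ r ∈ Set.Icc 0 R, 0 < φ₂ r)
    (hode₂ : ∀ r ∈ Set.Ioo 0 R,
      HasDerivAt (fun s => s ^ ((N : ℝ) - 1) * |Dφ₂ s| ^ (p - 2) * Dφ₂ s)
        (-(r ^ ((N : ℝ) - 1) * |φ₂ r| ^ (q - 1))) r)
    (hiv₂ : φ₂ 0 = c) (hiv₂' : Dφ₂ 0 = 0) :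
    ∀ r ∈ Set.Icc 0 R, φ₁ r = φ₂ r := by
  obtain ⟨hp, hq, -⟩ := hpq
  have hN1 : 1 ≤ N := le_trans (by norm_num) hN
  have hNR : (1:ℝ) ≤ (N:ℝ) := by exact_mod_cast hN1
  have hφc₁ : ContinuousOn φ₁ (Icc 0 R) := fun x hx => (hder₁ x hx).continuousWithinAt
  have hφc₂ : ContinuousOn φ₂ (Icc 0 R) := fun x hx => (hder₂ x hx).continuousWithinAt
  have hne : (Icc (0:ℝ) R).Nonempty := nonempty_Icc.mpr hR.le
  -- min and max of both solutions
  obtain ⟨x₁, hx₁, hmin₁⟩ := isCompact_Icc.exists_isMinOn hne hφc₁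
  obtain ⟨x₂, hx₂, hmin₂⟩ := isCompact_Icc.exists_isMinOn hne hφc₂
  obtain ⟨y₁, hy₁, hmax₁⟩ := isCompact_Icc.exists_isMaxOn hne hφc₁
  obtain ⟨y₂, hy₂, hmax₂⟩ := isCompact_Icc.exists_isMaxOn hne hφc₂
  set m : ℝ := min (φ₁ x₁) (φ₂ x₂) with hm_def
  set M : ℝ := max (φ₁ y₁) (φ₂ y₂) with hM_def
  have hm : 0 < m := lt_min (hpos₁ x₁ hx₁) (hpos₂ x₂ hx₂)
  have hbd₁ : ∀ s ∈ Icc 0 R, φ₁ s ∈ Icc m M := fun s hs =>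
    ⟨le_trans (min_le_left _ _) (isMinOn_iff.mp hmin₁ s hs),
     le_trans (isMaxOn_iff.mp hmax₁ s hs) (le_max_left _ _)⟩
  have hbd₂ : ∀ s ∈ Icc 0 R, φ₂ s ∈ Icc m M := fun s hs =>
    ⟨le_trans (min_le_right _ _) (isMinOn_iff.mp hmin₂ s hs),
     le_trans (isMaxOn_iff.mp hmax₂ s hs) (le_max_right _ _)⟩
  have hmM : m ≤ M := le_trans (hbd₁ 0 ⟨le_refl _, hR.le⟩).1 (hbd₁ 0 ⟨le_refl _, hR.le⟩).2
  -- formulas for the derivatives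
  have hform₁ := Dphi_formula N hN p q R hp hq hR φ₁ Dφ₁ m M hm
    (repA N hN p q R hp hq hR φ₁ Dφ₁ hder₁ hcont₁ hode₁ hiv₁')
    (HF_bounds N hN q R hq hR φ₁ hφc₁ m M hm hbd₁)
  have hform₂ := Dphi_formula N hN p q R hp hq hR φ₂ Dφ₂ m M hm
    (repA N hN p q R hp hq hR φ₂ Dφ₂ hder₂ hcont₂ hode₂ hiv₂')
    (HF_bounds N hN q R hq hR φ₂ hφc₂ m M hm hbd₂)
  -- constants
  set α : ℝ := 1/(p-1) with hα_def
  have hα : 0 < α := by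
    have : 0 < p - 1 := by linarith
    rw [hα_def]; positivity
  set k : ℝ := m ^ (q-1) / N with hk_def
  set Kc : ℝ := M ^ (q-1) / N with hK_def
  have hNpos : (0:ℝ) < (N:ℝ) := by positivity
  have hk : 0 < k := by
    rw [hk_def]; exact div_pos (Real.rpow_pos_of_pos hm _) hNpos
  have hKc : 0 ≤ Kc := by
    rw [hK_def]
    exact div_nonneg (Real.rpow_nonneg (le_trans hm.le hmM) _) hNpos.le
  set L : ℝ := (q-1) * (m ^ (q-2) + M ^ (q-2)) with hL_def
  have hL : 0 ≤ L := by
    rw [hL_def]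
    have h1 : (0:ℝ) ≤ m ^ (q-2) := Real.rpow_nonneg hm.le _
    have h2 : (0:ℝ) ≤ M ^ (q-2) := Real.rpow_nonneg (le_trans hm.le hmM) _
    nlinarith
  set C₁ : ℝ := α * (k ^ (α-1) + Kc ^ (α-1)) * L with hC₁_def
  have hC₁ : 0 ≤ C₁ := by
    rw [hC₁_def]
    have h1 : (0:ℝ) ≤ k ^ (α-1) := Real.rpow_nonneg hk.le _
    have h2 : (0:ℝ) ≤ Kc ^ (α-1) := Real.rpow_nonneg hKc _
    positivity
  -- the difference and its integral
  set w : ℝ → ℝ := fun s => φ₁ (projR R s) - φ₂ (projR R s) with hw_def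
  have hwc : Continuous w :=
    (hφc₁.comp_continuous (contProjR R) (projR_mem hR.le)).sub
      (hφc₂.comp_continuous (contProjR R) (projR_mem hR.le))
  set V : ℝ → ℝ := fun r => ∫ s in (0:ℝ)..r, |w s| with hV_def
  have hVmono : ∀ ⦃s t : ℝ⦄, s ≤ t → V s ≤ V t := by
    intro s t hst
    have h1 : V s + ∫ u in s..t, |w u| = V t :=
      integral_add_adjacent_intervals (hwc.abs.intervalIntegrable _ _)
        (hwc.abs.intervalIntegrable _ _)
    have h2 : 0 ≤ ∫ u in s..t, |w u| :=
      integral_nonneg hst (fun u _ => abs_nonneg _)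
    linarith
  have hVnonneg : ∀ r, 0 ≤ r → 0 ≤ V r := by
    intro r hr
    exact integral_nonneg hr (fun u _ => abs_nonneg _)
  -- pointwise bound on the difference of derivatives
  have hD : ∀ s ∈ Ioc 0 R, |Dφ₁ s - Dφ₂ s| ≤ C₁ * s ^ (α-1) * V s := by
    intro s hs
    have hs0 : (0:ℝ) < s := hs.1
    have hsI : s ∈ Icc 0 R := ⟨hs0.le, hs.2⟩
    obtain ⟨hf₁, hl₁, hh₁⟩ := hform₁ s hs
    obtain ⟨hf₂, hl₂, hh₂⟩ := hform₂ s hs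
    set a₁ : ℝ := s ^ (-((N:ℝ)-1)) * HF N q R φ₁ s with ha₁_def
    set a₂ : ℝ := s ^ (-((N:ℝ)-1)) * HF N q R φ₂ s with ha₂_def
    have hks : 0 < k * s := by positivity
    have ha₁ : a₁ ∈ Icc (k*s) (Kc*s) := ⟨hl₁, hh₁⟩
    have ha₂ : a₂ ∈ Icc (k*s) (Kc*s) := ⟨hl₂, hh₂⟩
    -- difference of the a's
    have haa : |a₁ - a₂| ≤ L * V s := by
      have hsp : (0:ℝ) < s ^ (-((N:ℝ)-1)) := Real.rpow_pos_of_pos hs0 _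
      have hHdiff : HF N q R φ₁ s - HF N q R φ₂ s
          = ∫ t in (0:ℝ)..s, (psiF N q R φ₁ t - psiF N q R φ₂ t) := by
        rw [integral_sub ((contPsi hN1 hq.le hR.le hφc₁).intervalIntegrable _ _)
          ((contPsi hN1 hq.le hR.le hφc₂).intervalIntegrable _ _)]
        rfl
      have hpt : ∀ t ∈ Icc (0:ℝ) s, |psiF N q R φ₁ t - psiF N q R φ₂ t|
          ≤ s ^ ((N:ℝ)-1) * L * |w t| := by
        intro t ht
        have htI : t ∈ Icc 0 R := ⟨ht.1, le_trans ht.2 hs.2⟩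
        have h1 : psiF N q R φ₁ t - psiF N q R φ₂ t
            = t ^ ((N:ℝ)-1) * ((φ₁ t) ^ (q-1) - (φ₂ t) ^ (q-1)) := by
          rw [psiF, psiF, projR_eq htI, abs_of_pos (hpos₁ t htI), abs_of_pos (hpos₂ t htI)]
          ring
        rw [h1, abs_mul, abs_of_nonneg (Real.rpow_nonneg ht.1 _)]
        have h2 : |(φ₁ t) ^ (q-1) - (φ₂ t) ^ (q-1)| ≤ L * |φ₁ t - φ₂ t| := by
          have h2' := rpow_lip (show (0:ℝ) < q-1 by linarith) hm (hbd₁ t htI) (hbd₂ t htI)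
          rw [show q-1-1 = q-2 by ring] at h2'
          rw [hL_def]
          exact h2'
        have h3 : t ^ ((N:ℝ)-1) ≤ s ^ ((N:ℝ)-1) :=
          Real.rpow_le_rpow ht.1 ht.2 (by linarith)
        have h4 : |w t| = |φ₁ t - φ₂ t| := by rw [hw_def]; simp [projR_eq htI]
        rw [h4]
        have h5 : (0:ℝ) ≤ t ^ ((N:ℝ)-1) := Real.rpow_nonneg ht.1 _
        calc t ^ ((N:ℝ)-1) * |(φ₁ t) ^ (q-1) - (φ₂ t) ^ (q-1)|
            ≤ t ^ ((N:ℝ)-1) * (L * |φ₁ t - φ₂ t|) := by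
              exact mul_le_mul_of_nonneg_left h2 h5
          _ ≤ s ^ ((N:ℝ)-1) * (L * |φ₁ t - φ₂ t|) := by
              have : 0 ≤ L * |φ₁ t - φ₂ t| := mul_nonneg hL (abs_nonneg _)
              exact mul_le_mul_of_nonneg_right h3 this
          _ = s ^ ((N:ℝ)-1) * L * |φ₁ t - φ₂ t| := by ring
      have hIabs : |HF N q R φ₁ s - HF N q R φ₂ s|
          ≤ ∫ t in (0:ℝ)..s, s ^ ((N:ℝ)-1) * L * |w t| := by
        rw [hHdiff]
        calc |∫ t in (0:ℝ)..s, (psiF N q R φ₁ t - psiF N q R φ₂ t)|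
            ≤ ∫ t in (0:ℝ)..s, |psiF N q R φ₁ t - psiF N q R φ₂ t| :=
              abs_integral_le_integral_abs hs0.le
          _ ≤ ∫ t in (0:ℝ)..s, s ^ ((N:ℝ)-1) * L * |w t| := by
              refine integral_mono_on hs0.le ?_ ?_ hpt
              · exact (((contPsi hN1 hq.le hR.le hφc₁).sub
                  (contPsi hN1 hq.le hR.le hφc₂)).abs).intervalIntegrable _ _
              · exact (continuous_const.mul hwc.abs).intervalIntegrable _ _
      have hIval : (∫ t in (0:ℝ)..s, s ^ ((N:ℝ)-1) * L * |w t|)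
          = s ^ ((N:ℝ)-1) * L * V s := by
        rw [hV_def]
        exact integral_const_mul _ _
      have hcancel : s ^ (-((N:ℝ)-1)) * s ^ ((N:ℝ)-1) = 1 := by
        rw [← Real.rpow_add hs0, show -((N:ℝ)-1) + ((N:ℝ)-1) = 0 by ring, Real.rpow_zero]
      calc |a₁ - a₂| = s ^ (-((N:ℝ)-1)) * |HF N q R φ₁ s - HF N q R φ₂ s| := by
            rw [ha₁_def, ha₂_def, ← mul_sub, abs_mul, abs_of_pos hsp]
        _ ≤ s ^ (-((N:ℝ)-1)) * (s ^ ((N:ℝ)-1) * L * V s) := by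
            refine mul_le_mul_of_nonneg_left ?_ hsp.le
            rw [← hIval]; exact hIabs
        _ = s ^ (-((N:ℝ)-1)) * s ^ ((N:ℝ)-1) * (L * V s) := by ring
        _ = L * V s := by rw [hcancel, one_mul]
    -- apply the Lipschitz bound for x ↦ x^α
    have hlip : |a₂ ^ α - a₁ ^ α| ≤ α * ((k*s) ^ (α-1) + (Kc*s) ^ (α-1)) * |a₂ - a₁| :=
      rpow_lip hα hks ha₂ ha₁
    have hmulr : ∀ u : ℝ, 0 ≤ u → (u*s) ^ (α-1) = u ^ (α-1) * s ^ (α-1) := fun u hu =>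
      Real.mul_rpow hu hs0.le
    have hDeq : Dφ₁ s - Dφ₂ s = a₂ ^ α - a₁ ^ α := by
      rw [hf₁, hf₂]; ring
    calc |Dφ₁ s - Dφ₂ s| = |a₂ ^ α - a₁ ^ α| := by rw [hDeq]
      _ ≤ α * ((k*s) ^ (α-1) + (Kc*s) ^ (α-1)) * |a₂ - a₁| := hlip
      _ = α * (k ^ (α-1) + Kc ^ (α-1)) * s ^ (α-1) * |a₁ - a₂| := by
          rw [hmulr k hk.le, hmulr Kc hKc, abs_sub_comm]; ring
      _ ≤ α * (k ^ (α-1) + Kc ^ (α-1)) * s ^ (α-1) * (L * V s) := by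
          refine mul_le_mul_of_nonneg_left haa ?_
          have h1 : (0:ℝ) ≤ k ^ (α-1) := Real.rpow_nonneg hk.le _
          have h2 : (0:ℝ) ≤ Kc ^ (α-1) := Real.rpow_nonneg hKc _
          have h3 : (0:ℝ) ≤ s ^ (α-1) := Real.rpow_nonneg hs0.le _
          positivity
      _ = C₁ * s ^ (α-1) * V s := by rw [hC₁_def]; ring
  -- the key integral estimate : |w r| ≤ C₂ * V r
  set C₂ : ℝ := C₁ * R ^ α / α with hC₂_def
  have hC₂ : 0 ≤ C₂ := by
    rw [hC₂_def]
    have : (0:ℝ) ≤ R ^ α := Real.rpow_nonneg hR.le _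
    positivity
  have hstar : ∀ r ∈ Icc (0:ℝ) R, |w r| ≤ C₂ * V r := by
    intro r hr
    rcases eq_or_lt_of_le hr.1 with h0 | hr0
    · have hp0 : projR R 0 = 0 := projR_eq ⟨le_refl _, hR.le⟩
      have hw0 : w 0 = 0 := by rw [hw_def]; simp only [hp0, hiv₁, hiv₂, sub_self]
      have hV0 : V 0 = 0 := by rw [hV_def]; simp
      rw [← h0, hw0, hV0, abs_zero, mul_zero]
    · -- r > 0 : FTC for the difference
      have hdiffc : ContinuousOn (fun s => φ₁ s - φ₂ s) (Icc 0 r) :=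
        (hφc₁.sub hφc₂).mono (Icc_subset_Icc (le_refl _) hr.2)
      have hderiv : ∀ x ∈ Ioo (0:ℝ) r, HasDerivWithinAt (fun s => φ₁ s - φ₂ s)
          (Dφ₁ x - Dφ₂ x) (Ioi x) x := by
        intro x hx
        have hxI : x ∈ Icc 0 R := ⟨hx.1.le, le_trans hx.2.le hr.2⟩
        have hnbhd : Icc (0:ℝ) R ∈ nhds x :=
          Icc_mem_nhds hx.1 (lt_of_lt_of_le hx.2 hr.2)
        have h1 : HasDerivAt φ₁ (Dφ₁ x) x := (hder₁ x hxI).hasDerivAt hnbhd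
        have h2 : HasDerivAt φ₂ (Dφ₂ x) x := (hder₂ x hxI).hasDerivAt hnbhd
        exact (h1.sub h2).hasDerivWithinAt
      have hint : IntervalIntegrable (fun s => Dφ₁ s - Dφ₂ s) volume 0 r := by
        apply ContinuousOn.intervalIntegrable
        rw [uIcc_of_le hr0.le]
        exact (hcont₁.sub hcont₂).mono (Icc_subset_Icc (le_refl _) hr.2)
      have hFTC : ∫ s in (0:ℝ)..r, (Dφ₁ s - Dφ₂ s) = (φ₁ r - φ₂ r) - (φ₁ 0 - φ₂ 0) :=
        integral_eq_sub_of_hasDeriv_right_of_le hr0.le hdiffc hderiv hint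
      have h00 : φ₁ 0 - φ₂ 0 = 0 := by rw [hiv₁, hiv₂, sub_self]
      have hwr : w r = ∫ s in (0:ℝ)..r, (Dφ₁ s - Dφ₂ s) := by
        rw [hFTC, h00, sub_zero, hw_def]
        simp [projR_eq hr]
      -- bound the integral
      have hbound : ∀ s ∈ Icc (0:ℝ) r, |Dφ₁ s - Dφ₂ s| ≤ C₁ * V r * s ^ (α-1) := by
        intro s hs
        rcases eq_or_lt_of_le hs.1 with h0s | h0s
        · rw [← h0s, hiv₁', hiv₂', sub_self, abs_zero]
          exact mul_nonneg (mul_nonneg hC₁ (hVnonneg r hr.1))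
            (Real.rpow_nonneg (le_refl _) _)
        · calc |Dφ₁ s - Dφ₂ s| ≤ C₁ * s ^ (α-1) * V s :=
              hD s ⟨h0s, le_trans hs.2 hr.2⟩
            _ ≤ C₁ * s ^ (α-1) * V r := by
                refine mul_le_mul_of_nonneg_left (hVmono hs.2) ?_
                exact mul_nonneg hC₁ (Real.rpow_nonneg hs.1 _)
            _ = C₁ * V r * s ^ (α-1) := by ring
      have hrint : IntervalIntegrable (fun s : ℝ => s ^ (α-1)) volume 0 r :=
        intervalIntegrable_rpow' (by linarith)
      have habs : |w r| ≤ ∫ s in (0:ℝ)..r, C₁ * V r * s ^ (α-1) := by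
        rw [hwr]
        calc |∫ s in (0:ℝ)..r, (Dφ₁ s - Dφ₂ s)| ≤ ∫ s in (0:ℝ)..r, |Dφ₁ s - Dφ₂ s| :=
            abs_integral_le_integral_abs hr0.le
          _ ≤ ∫ s in (0:ℝ)..r, C₁ * V r * s ^ (α-1) := by
            refine integral_mono_on hr0.le ?_ (hrint.const_mul _) hbound
            exact (hint.abs)
      have hval : (∫ s in (0:ℝ)..r, C₁ * V r * s ^ (α-1)) = C₁ * V r * (r ^ α / α) := by
        rw [intervalIntegral.integral_const_mul, integral_rpow (Or.inl (by linarith))]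
        rw [show α - 1 + 1 = α by ring, Real.zero_rpow hα.ne']
        ring
      have hfin : C₁ * V r * (r ^ α / α) ≤ C₂ * V r := by
        have h1 : r ^ α ≤ R ^ α := Real.rpow_le_rpow hr.1 hr.2 hα.le
        have h2 : 0 ≤ V r := hVnonneg r hr.1
        have e : C₁ * V r * (r ^ α / α) = (C₁ * r ^ α / α) * V r := by ring
        rw [hC₂_def, e]
        refine mul_le_mul_of_nonneg_right ?_ h2
        exact (div_le_div_iff_of_pos_right hα).mpr (mul_le_mul_of_nonneg_left h1 hC₁)
      calc |w r| ≤ ∫ s in (0:ℝ)..r, C₁ * V r * s ^ (α-1) := habs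
        _ = C₁ * V r * (r ^ α / α) := hval
        _ ≤ C₂ * V r := hfin
  -- Gronwall argument
  have hVd : ∀ x : ℝ, HasDerivAt V (|w x|) x := by
    intro x
    rw [hV_def]
    exact integral_hasDerivAt_right (hwc.abs.intervalIntegrable _ _)
      (hwc.abs.stronglyMeasurableAtFilter _ _) hwc.abs.continuousAt
  set G : ℝ → ℝ := fun x => V x * Real.exp (-C₂ * x) with hG_def
  have hGd : ∀ x : ℝ, HasDerivAt G ((|w x| - C₂ * V x) * Real.exp (-C₂ * x)) x := by
    intro x
    have h1 : HasDerivAt (fun y : ℝ => -C₂ * y) (-C₂) x := by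
      simpa using (hasDerivAt_id x).const_mul (-C₂)
    have he : HasDerivAt (fun y : ℝ => Real.exp (-C₂ * y)) (-C₂ * Real.exp (-C₂ * x)) x := by
      simpa [mul_comm] using h1.exp
    have h3 := (hVd x).mul he
    rw [hG_def]
    exact h3.congr_deriv (by ring)
  have hGanti : AntitoneOn G (Icc 0 R) := by
    refine antitoneOn_of_deriv_nonpos (convex_Icc 0 R)
      (fun x _ => (hGd x).continuousAt.continuousWithinAt)
      (fun x hx => (hGd x).differentiableAt.differentiableWithinAt) ?_
    intro x hx
    rw [interior_Icc] at hx
    rw [(hGd x).deriv]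
    have hxI : x ∈ Icc 0 R := Ioo_subset_Icc_self hx
    have h1 : |w x| - C₂ * V x ≤ 0 := by linarith [hstar x hxI]
    exact mul_nonpos_iff.mpr (Or.inr ⟨h1, (Real.exp_pos _).le⟩)
  intro r hr
  have hG0 : G 0 = 0 := by rw [hG_def]; simp [hV_def]
  have hGr : G r ≤ 0 := hG0 ▸ hGanti ⟨le_refl _, hR.le⟩ hr hr.1
  have hVr0 : V r = 0 := by
    have h2 : 0 ≤ G r := by
      rw [hG_def]
      exact mul_nonneg (hVnonneg r hr.1) (Real.exp_pos _).le
    have h3 : G r = 0 := le_antisymm hGr h2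
    rw [hG_def] at h3
    exact (mul_eq_zero.mp h3).resolve_right (Real.exp_pos _).ne'
  have h6 := hstar r hr
  rw [hVr0, mul_zero] at h6
  have h7 : w r = 0 := abs_nonpos_iff.mp h6
  rw [hw_def] at h7
  simp only [projR_eq hr] at h7
  linarith
end
end
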